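/- arXiv:1304.0048 — 2 statements merged into one kernel-verified Lean document; each statement's English description precedes it below -/
import Mathlib

section
/- Let m ≥ 2 be an integer. There exists a constant C > 0 such that for every real a ≥ 0 and every complex z with |z| ≥ 1 and a ≤ |z|, one has |z|^{1−m} Σ_{l=1}^{∞} l^{m−1}/(1 + |l − a|)^{m+1} ≤ C. -/
/-!
Since `l + 1 ≤ a + |l + 1 - a| ≤ |z| (1 + |l + 1 - a|)`, the `l`-th term is at most
`|z|^{m-1} / (1 + |l + 1 - a|)^2`. Replacing `a` by `⌊a⌋` costs at most a factor `4` in this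
quadratic decay, and after the integer shift the sum is bounded by
`∑_{j ∈ ℤ} (1 + |j|)^{-2}`, a constant independent of `a` and `z`.
-/

open Complex Real

lemma summable_one_div_one_add_abs_int_sq :
    Summable fun j : ℤ => 1 / (1 + |(j : ℝ)|) ^ 2 := by
  refine (summable_one_div_int_pow.mpr one_lt_two).of_norm_bounded_eventually ?_
  filter_upwards [(Set.finite_singleton (0 : ℤ)).compl_mem_cofinite] with j hj
  have hj : (j : ℝ) ≠ 0 := by exact_mod_cast hj
  rw [Real.norm_of_nonneg (by positivity), ← sq_abs (j : ℝ)]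
  gcongr
  linarith

lemma one_add_abs_sub_floor_le (x a : ℝ) : 1 + |x - ⌊a⌋| ≤ 2 * (1 + |x - a|) := by
  have hfrac : |a - ⌊a⌋| ≤ 1 := by
    rw [abs_of_nonneg (sub_nonneg.mpr (Int.floor_le a))]
    linarith [Int.lt_floor_add_one a]
  have := abs_sub_le x a ⌊a⌋
  linarith [abs_nonneg (x - a)]

lemma one_div_one_add_abs_sub_sq_le (x a : ℝ) :
    1 / (1 + |x - a|) ^ 2 ≤ 4 * (1 / (1 + |x - ⌊a⌋|) ^ 2) := by
  rw [mul_one_div, div_le_div_iff₀ (by positivity) (by positivity), one_mul,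
    show (4 : ℝ) = 2 ^ 2 by norm_num, ← mul_pow]
  gcongr
  exact one_add_abs_sub_floor_le x a

lemma summable_one_div_one_add_abs_int_sub_int_sq (k : ℤ) :
    Summable fun n : ℤ => 1 / (1 + |((n - k : ℤ) : ℝ)|) ^ 2 :=
  summable_one_div_one_add_abs_int_sq.comp_injective sub_left_injective

section IntegerShift

variable (a : ℝ)

lemma summable_one_div_one_add_abs_int_sub_sq :
    Summable fun n : ℤ => 1 / (1 + |(n : ℝ) - a|) ^ 2 := by
  refine Summable.of_nonneg_of_le (fun _ => by positivity) (fun n => ?_)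
    ((summable_one_div_one_add_abs_int_sub_int_sq ⌊a⌋).mul_left 4)
  simpa only [Int.cast_sub] using one_div_one_add_abs_sub_sq_le n a

lemma tsum_one_div_one_add_abs_int_sub_sq_le :
    ∑' n : ℤ, 1 / (1 + |(n : ℝ) - a|) ^ 2 ≤ 4 * ∑' j : ℤ, 1 / (1 + |(j : ℝ)|) ^ 2 := by
  have hshift : ∑' n : ℤ, 1 / (1 + |((n - ⌊a⌋ : ℤ) : ℝ)|) ^ 2
      = ∑' j : ℤ, 1 / (1 + |(j : ℝ)|) ^ 2 :=
    (Equiv.subRight ⌊a⌋).tsum_eq fun j : ℤ => 1 / (1 + |(j : ℝ)|) ^ 2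
  rw [← hshift, ← tsum_mul_left]
  refine (summable_one_div_one_add_abs_int_sub_sq a).tsum_le_tsum (fun n => ?_) ?_
  · simpa only [Int.cast_sub] using one_div_one_add_abs_sub_sq_le n a
  · exact (summable_one_div_one_add_abs_int_sub_int_sq ⌊a⌋).mul_left 4

end IntegerShift

lemma pow_div_one_add_abs_sub_pow_le {x a R : ℝ} (n : ℕ) (hx : 0 ≤ x) (hR : 1 ≤ R)
    (haR : a ≤ R) : x ^ n / (1 + |x - a|) ^ (n + 2) ≤ R ^ n * (1 / (1 + |x - a|) ^ 2) := by
  have hxR : x ≤ R * (1 + |x - a|) := by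
    nlinarith [le_abs_self (x - a), abs_nonneg (x - a)]
  rw [mul_one_div, div_le_div_iff₀ (by positivity) (by positivity), pow_add, ← mul_assoc,
    ← mul_pow]
  gcongr

/-- Uniform summability estimate: for `m ≥ 2` there is `C > 0` such that for all
`a ≥ 0` and all `z ∈ ℂ` with `|z| ≥ 1` and `a ≤ |z|`,
`|z|^{1-m} Σ_{l=1}^∞ l^{m-1}/(1 + |l - a|)^{m+1} ≤ C`. -/
theorem stmt5 (m : ℕ) (hm : 2 ≤ m) :
    ∃ C : ℝ, 0 < C ∧ ∀ a : ℝ, 0 ≤ a → ∀ z : ℂ,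
      1 ≤ ‖z‖ → a ≤ ‖z‖ →
      (∑' l : ℕ, ((l : ℝ) + 1) ^ (m - 1) / (1 + |((l : ℝ) + 1) - a|) ^ (m + 1))
        / ‖z‖ ^ (m - 1) ≤ C := by
  set S := ∑' j : ℤ, 1 / (1 + |(j : ℝ)|) ^ 2
  have hS : 0 < S :=
    summable_one_div_one_add_abs_int_sq.tsum_pos (fun _ => by positivity) 0 (by norm_num)
  refine ⟨4 * S, by positivity, fun a _ z hz haz => ?_⟩
  obtain ⟨n, rfl⟩ : ∃ n, m = n + 1 := ⟨m - 1, by omega⟩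
  rw [Nat.add_sub_cancel, show n + 1 + 1 = n + 2 by ring, div_le_iff₀ (by positivity)]
  let g : ℤ → ℝ := fun k => 1 / (1 + |(k : ℝ) - a|) ^ 2
  have hsucc : Function.Injective fun l : ℕ => (l + 1 : ℤ) := fun _ _ h => by simpa using h
  have hg : Summable (g ∘ fun l : ℕ => (l + 1 : ℤ)) :=
    (summable_one_div_one_add_abs_int_sub_sq a).comp_injective hsucc
  have hterm (l : ℕ) : ((l : ℝ) + 1) ^ n / (1 + |(l : ℝ) + 1 - a|) ^ (n + 2)
      ≤ ‖z‖ ^ n * g (l + 1) := by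
    simpa [g] using pow_div_one_add_abs_sub_pow_le n (by positivity : (0 : ℝ) ≤ l + 1) hz haz
  calc ∑' l : ℕ, ((l : ℝ) + 1) ^ n / (1 + |(l : ℝ) + 1 - a|) ^ (n + 2)
      ≤ ∑' l : ℕ, ‖z‖ ^ n * g (l + 1) :=
        (Summable.of_nonneg_of_le (fun _ => by positivity) hterm (hg.mul_left _)).tsum_le_tsum
          hterm (hg.mul_left _)
    _ = ‖z‖ ^ n * ∑' l : ℕ, g (l + 1) := tsum_mul_left
    _ ≤ ‖z‖ ^ n * ∑' k : ℤ, g k := by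
        gcongr
        exact tsum_comp_le_tsum_of_inj (summable_one_div_one_add_abs_int_sub_sq a)
          (fun _ => by positivity) hsucc
    _ ≤ ‖z‖ ^ n * (4 * S) := by gcongr; exact tsum_one_div_one_add_abs_int_sub_sq_le a
    _ = 4 * S * ‖z‖ ^ n := mul_comm _ _
end

section
/- Let m ≥ 2, α > 0 large, and let τ ∈ [α + k − 1, α + k) with integer k ≥ 2, and let z = α + iβ with 0 < β ≤ 1/2. Then there is a constant C = C(m) such that |τ^m − z^m| ≥ (k−1)(α+k)^{m−1}/C for all α sufficiently large (depending on m). -/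
/-!
Since `‖z‖ ≤ α + 1/2 ≤ τ - (k - 1)/2`, the reverse triangle inequality and the factorisation
`τ^m - s^m ≥ (τ - s) τ^(m-1)` for `0 ≤ s ≤ τ` give `|τ^m - z^m| ≥ (k - 1)/2 · τ^(m-1)`, and
`τ ≥ α + k - 1 ≥ (α + k)/2`. Hence `C = 2^m` and `A = 0` work.
-/

open Complex Real

lemma sub_mul_pow_le_pow_succ_sub_pow_succ {R : Type*} [CommRing R] [LinearOrder R]
    [IsOrderedRing R] {s t : R} (hs : 0 ≤ s) (hst : s ≤ t) (n : ℕ) :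
    (t - s) * t ^ n ≤ t ^ (n + 1) - s ^ (n + 1) := by
  have hpow : 0 ≤ s * (t ^ n - s ^ n) := mul_nonneg hs (sub_nonneg.2 (pow_le_pow_left₀ hs hst n))
  rw [← sub_nonneg]
  convert hpow using 1
  ring

lemma norm_sub_norm_mul_pow_le_norm_pow_sub_pow {𝕜 : Type*} [NormedDivisionRing 𝕜] {x z : 𝕜}
    (h : ‖z‖ ≤ ‖x‖) (n : ℕ) :
    (‖x‖ - ‖z‖) * ‖x‖ ^ n ≤ ‖x ^ (n + 1) - z ^ (n + 1)‖ :=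
  calc (‖x‖ - ‖z‖) * ‖x‖ ^ n ≤ ‖x‖ ^ (n + 1) - ‖z‖ ^ (n + 1) :=
        sub_mul_pow_le_pow_succ_sub_pow_succ (norm_nonneg z) h n
    _ = ‖x ^ (n + 1)‖ - ‖z ^ (n + 1)‖ := by rw [norm_pow, norm_pow]
    _ ≤ ‖x ^ (n + 1) - z ^ (n + 1)‖ := norm_sub_norm_le _ _

lemma norm_ofReal_add_I_mul_le {α β : ℝ} (hα : 0 ≤ α) (hβ : 0 ≤ β) :
    ‖(α : ℂ) + I * β‖ ≤ α + β :=
  (norm_le_abs_re_add_abs_im _).trans_eq <| by simp [abs_of_nonneg hα, abs_of_nonneg hβ]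

/-- For `m ≥ 2` there are constants `C = C(m) > 0` and `A = A(m)` such that for
all `α ≥ A`, integers `k ≥ 2`, `τ ∈ [α + k - 1, α + k)`, and `z = α + iβ` with
`0 < β ≤ 1/2`, one has `|τ^m - z^m| ≥ (k-1)(α+k)^{m-1}/C`. -/
theorem stmt18 (m : ℕ) (hm : 2 ≤ m) :
    ∃ C : ℝ, 0 < C ∧ ∃ A : ℝ, ∀ α : ℝ, A ≤ α → ∀ k : ℕ, 2 ≤ k →
      ∀ τ : ℝ, α + k - 1 ≤ τ → τ < α + k →
      ∀ β : ℝ, 0 < β → β ≤ 1 / 2 →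
        ((k : ℝ) - 1) * (α + k) ^ (m - 1) / C
          ≤ ‖(τ : ℂ) ^ m - ((α : ℂ) + Complex.I * β) ^ m‖ := by
  obtain ⟨n, rfl⟩ : ∃ n, m = n + 1 := ⟨m - 1, by omega⟩
  refine ⟨2 ^ (n + 1), by positivity, 0, fun α hα k hk τ hτ_ge _ β hβ hβ_le => ?_⟩
  have hk2 : (2 : ℝ) ≤ k := by exact_mod_cast hk
  set z : ℂ := (α : ℂ) + I * β
  have hz : ‖z‖ ≤ α + 1 / 2 := (norm_ofReal_add_I_mul_le hα hβ.le).trans (by linarith)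
  have hτ : ‖(τ : ℂ)‖ = τ := by rw [norm_real, norm_of_nonneg (by linarith)]
  have hgap : (k : ℝ) - 1 ≤ 2 * (τ - ‖z‖) := by linarith
  have hgrowth : α + k ≤ 2 * τ := by linarith
  calc ((k : ℝ) - 1) * (α + k) ^ (n + 1 - 1) / 2 ^ (n + 1)
      ≤ 2 * (τ - ‖z‖) * (2 * τ) ^ n / 2 ^ (n + 1) := by
        rw [Nat.add_sub_cancel]; gcongr; linarith
    _ = (‖(τ : ℂ)‖ - ‖z‖) * ‖(τ : ℂ)‖ ^ n := by rw [hτ, mul_pow, pow_succ]; field_simp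
    _ ≤ ‖(τ : ℂ) ^ (n + 1) - z ^ (n + 1)‖ :=
        norm_sub_norm_mul_pow_le_norm_pow_sub_pow (by linarith) n
end
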